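/- arXiv:2410.15204 — 2 statements merged into one kernel-verified Lean document; each statement's English description precedes it below -/
import Mathlib

section
/- If two continuous homomorphisms φ, ψ from a compact group K into a topological group U with no small subgroups are sufficiently uniformly close (with respect to a metric on U), then they have equal kernels. -/
namespace MonoidHom

variable {G U : Type*} [Group G] [Group U] [PseudoMetricSpace U]

lemma map_ker_subset_ball {φ ψ : G →* U} {ε : ℝ} (hclose : ∀ x, dist (φ x) (ψ x) < ε) :
    (φ.ker.map ψ : Set U) ⊆ Metric.ball 1 ε := by
  rintro _ ⟨x, hx, rfl⟩
  rw [Metric.mem_ball, dist_comm, ← (mem_ker.mp hx : φ x = 1)]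
  exact hclose x

lemma ker_le_ker_of_dist_lt {W : Set U} (hns : ∀ S : Subgroup U, (S : Set U) ⊆ W → S = ⊥)
    {ε : ℝ} (hball : Metric.ball 1 ε ⊆ W) {φ ψ : G →* U}
    (hclose : ∀ x, dist (φ x) (ψ x) < ε) : φ.ker ≤ ψ.ker :=
  (Subgroup.map_eq_bot_iff _).mp <| hns _ <| (map_ker_subset_ball hclose).trans hball

end MonoidHom

theorem stmt0_general {U : Type*} [Group U] [MetricSpace U]
    {K : Type*} [Group K] [TopologicalSpace K]
    (W : Set U) (hW : W ∈ nhds (1 : U))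
    (hns : ∀ S : Subgroup U, (S : Set U) ⊆ W → S = ⊥) :
    ∃ ε > (0 : ℝ), ∀ φ ψ : K →* U, Continuous φ → Continuous ψ →
      (∀ x : K, dist (φ x) (ψ x) < ε) → φ.ker = ψ.ker := by
  obtain ⟨ε, hε, hball⟩ := Metric.mem_nhds_iff.mp hW
  refine ⟨ε, hε, fun φ ψ _ _ hclose => le_antisymm ?_ ?_⟩
  · exact MonoidHom.ker_le_ker_of_dist_lt hns hball hclose
  · exact MonoidHom.ker_le_ker_of_dist_lt hns hball fun x => dist_comm (φ x) (ψ x) ▸ hclose x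

/-- If a topological group `U` (metrized compatibly) has an identity neighborhood `W`
containing no nontrivial subgroup, then there is `ε > 0` such that any two continuous
homomorphisms from a compact group `K` into `U` that are `ε`-close have equal kernels. -/
theorem stmt0 {U : Type*} [Group U] [MetricSpace U] [IsTopologicalGroup U]
    {K : Type*} [Group K] [TopologicalSpace K] [IsTopologicalGroup K] [CompactSpace K]
    (W : Set U) (hW : W ∈ nhds (1 : U))
    (hns : ∀ S : Subgroup U, (S : Set U) ⊆ W → S = ⊥) :
    ∃ ε > (0 : ℝ), ∀ φ ψ : K →* U, Continuous φ → Continuous ψ →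
      (∀ x : K, dist (φ x) (ψ x) < ε) → φ.ker = ψ.ker :=
  stmt0_general W hW hns
end

section
/- Suppose φ : K → U is a group homomorphism with {‖Ad(φ(s))‖ : s ∈ K} ≤ M, and ψ(s) = exp(α(s))φ(s) with ‖α(s)‖ ≤ η for all s. Then for every δ > 0 there is η > 0 (depending only on M and the local behavior of exp and the metric) such that ψ is a δ-morphism: d(ψ(st), ψ(s)ψ(t)) < δ for all s, t ∈ K. -/
/-- Let `U` be a group with a left-invariant metric, `exp : 𝔲 → U` continuous with
`exp 0 = 1`, and `Ad` satisfying the conjugation identity. If `φ : K → U` is a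
homomorphism with `‖Ad (φ s)‖ ≤ M` for all `s`, then for every `δ > 0` there is
`η > 0` such that for any `α : K → 𝔲` with `‖α s‖ ≤ η` for all `s`, the map
`ψ s = exp (α s) · φ s` is a `δ`-morphism. -/
theorem stmt9 {K : Type*} [Group K] {U : Type*} [Group U] [MetricSpace U]
    {𝔲 : Type*} [NormedAddCommGroup 𝔲] [NormedSpace ℝ 𝔲]
    (hinv : ∀ g x y : U, dist (g * x) (g * y) = dist x y)
    (exp : 𝔲 → U) (hexp0 : exp 0 = 1) (hexpc : Continuous exp)
    (Ad : U → 𝔲 →L[ℝ] 𝔲)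
    (hconj : ∀ (g : U) (x : 𝔲), g * exp x * g⁻¹ = exp (Ad g x))
    (φ : K →* U) (M : ℝ) (hM : ∀ s : K, ‖Ad (φ s)‖ ≤ M) :
    ∀ δ > (0 : ℝ), ∃ η > (0 : ℝ), ∀ α : K → 𝔲, (∀ s, ‖α s‖ ≤ η) →
      ∀ s t : K,
        dist (exp (α (s * t)) * φ (s * t)) ((exp (α s) * φ s) * (exp (α t) * φ t)) < δ := by
  intro δ hδ
  obtain ⟨ε, hε, hball⟩ :=
    Metric.continuousAt_iff.mp (hexpc.continuousAt (x := 0)) (δ / 3) (by linarith)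
  have hM0 : (0 : ℝ) ≤ M := le_trans (norm_nonneg _) (hM 1)
  set η := ε / (2 * (M + 1) ^ 2) with hη
  have hηpos : 0 < η := by positivity
  refine ⟨η, hηpos, ?_⟩
  intro α hα s t
  -- small exponentials are close to 1
  have hsmall : ∀ x : 𝔲, ‖x‖ < ε → dist (exp x) 1 < δ / 3 := by
    intro x hx
    have := hball (x := x) (by simpa [dist_zero_right] using hx)
    simpa [hexp0] using this
  -- key conjugation identity
  have key : ∀ (g : U) (x : 𝔲), exp x * g = g * exp (Ad g⁻¹ x) := by
    intro g x
    have h := hconj g⁻¹ x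
    rw [inv_inv] at h
    calc exp x * g = g * (g⁻¹ * exp x * g) := by group
      _ = g * exp (Ad g⁻¹ x) := by rw [h]
  set c := φ (s * t) with hc
  have hcinv : c⁻¹ = φ ((s * t)⁻¹) := by rw [hc, map_inv]
  -- rewrite both sides as c * (products of exponentials)
  have hLHS : exp (α (s * t)) * c = c * exp (Ad c⁻¹ (α (s * t))) := key c _
  have hmid : φ s * exp (α t) = exp (Ad (φ s) (α t)) * φ s := by
    have h := hconj (φ s) (α t)
    calc φ s * exp (α t) = (φ s * exp (α t) * (φ s)⁻¹) * φ s := by group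
      _ = exp (Ad (φ s) (α t)) * φ s := by rw [h]
  have hRHS : (exp (α s) * φ s) * (exp (α t) * φ t)
      = c * exp (Ad c⁻¹ (α s)) * exp (Ad c⁻¹ (Ad (φ s) (α t))) := by
    calc (exp (α s) * φ s) * (exp (α t) * φ t)
        = exp (α s) * (φ s * exp (α t)) * φ t := by group
      _ = exp (α s) * (exp (Ad (φ s) (α t)) * φ s) * φ t := by rw [hmid]
      _ = exp (α s) * (exp (Ad (φ s) (α t)) * c) := by
          rw [hc, map_mul]; group
      _ = exp (α s) * (c * exp (Ad c⁻¹ (Ad (φ s) (α t)))) := by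
          rw [key c (Ad (φ s) (α t))]
      _ = (exp (α s) * c) * exp (Ad c⁻¹ (Ad (φ s) (α t))) := by group
      _ = (c * exp (Ad c⁻¹ (α s))) * exp (Ad c⁻¹ (Ad (φ s) (α t))) := by
          rw [key c (α s)]
      _ = c * exp (Ad c⁻¹ (α s)) * exp (Ad c⁻¹ (Ad (φ s) (α t))) := by group
  -- norm bounds
  have hAdc : ‖Ad c⁻¹‖ ≤ M := by rw [hcinv]; exact hM _
  have hAds : ‖Ad (φ s)‖ ≤ M := hM s
  have bnd : ∀ x : 𝔲, ‖x‖ ≤ (M + 1) ^ 2 * η → ‖x‖ < ε := by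
    intro x hx
    have : (M + 1) ^ 2 * η = ε / 2 := by
      rw [hη]; field_simp
    rw [this] at hx
    linarith
  have b1 : ‖Ad c⁻¹ (α (s * t))‖ < ε := by
    refine bnd _ ?_
    calc ‖Ad c⁻¹ (α (s * t))‖ ≤ ‖Ad c⁻¹‖ * ‖α (s * t)‖ := (Ad c⁻¹).le_opNorm _
      _ ≤ M * η := mul_le_mul hAdc (hα _) (norm_nonneg _) hM0
      _ ≤ (M + 1) ^ 2 * η :=
          mul_le_mul_of_nonneg_right (by nlinarith) hηpos.le
  have b2 : ‖Ad c⁻¹ (α s)‖ < ε := by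
    refine bnd _ ?_
    calc ‖Ad c⁻¹ (α s)‖ ≤ ‖Ad c⁻¹‖ * ‖α s‖ := (Ad c⁻¹).le_opNorm _
      _ ≤ M * η := mul_le_mul hAdc (hα _) (norm_nonneg _) hM0
      _ ≤ (M + 1) ^ 2 * η :=
          mul_le_mul_of_nonneg_right (by nlinarith) hηpos.le
  have b3 : ‖Ad c⁻¹ (Ad (φ s) (α t))‖ < ε := by
    refine bnd _ ?_
    calc ‖Ad c⁻¹ (Ad (φ s) (α t))‖ ≤ ‖Ad c⁻¹‖ * ‖Ad (φ s) (α t)‖ :=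
          (Ad c⁻¹).le_opNorm _
      _ ≤ M * (M * η) := by
          refine mul_le_mul hAdc ?_ (norm_nonneg _) hM0
          calc ‖Ad (φ s) (α t)‖ ≤ ‖Ad (φ s)‖ * ‖α t‖ := (Ad (φ s)).le_opNorm _
            _ ≤ M * η := mul_le_mul hAds (hα _) (norm_nonneg _) hM0
      _ = M ^ 2 * η := by ring
      _ ≤ (M + 1) ^ 2 * η :=
          mul_le_mul_of_nonneg_right (by nlinarith) hηpos.le
  -- put everything together
  set w1 := Ad c⁻¹ (α (s * t))
  set w2 := Ad c⁻¹ (α s)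
  set w3 := Ad c⁻¹ (Ad (φ s) (α t))
  rw [hLHS, hRHS, mul_assoc, hinv]
  calc dist (exp w1) (exp w2 * exp w3)
      ≤ dist (exp w1) 1 + dist 1 (exp w2) + dist (exp w2) (exp w2 * exp w3) :=
        dist_triangle4 _ _ _ _
    _ = dist (exp w1) 1 + dist (exp w2) 1 + dist 1 (exp w3) := by
        rw [dist_comm 1 (exp w2)]
        congr 1
        have := hinv (exp w2) 1 (exp w3)
        rw [mul_one] at this
        rw [← this]
    _ < δ / 3 + δ / 3 + δ / 3 := by
        have h1 := hsmall _ b1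
        have h2 := hsmall _ b2
        have h3 := hsmall _ b3
        rw [dist_comm 1 (exp w3)]
        linarith
    _ = δ := by ring
end
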